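/- There exist absolute constants c_1, c_2 > 0 such that for all n ≥ 1, |K_{2^n}(x)| ≤ c_1 |K_{2^{n-1}}(x)| and |K_{2^n - 1}(x)| ≤ c_2 |K_{2^n}(x)| for every x in the dyadic group G. -/

import Mathlib

open MeasureTheory Finset

noncomputable section

/-- The dyadic group: countable product of `ZMod 2`. -/
abbrev G := ℕ → ZMod 2

instance : MeasurableSpace (ZMod 2) := ⊤

/-- Walsh–Paley function `w n`. -/
def walsh (n : ℕ) (x : G) : ℝ :=
  ∏ k ∈ Finset.range (n + 1), if n.testBit k then (-1 : ℝ) ^ (x k).val else 1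

/-- Walsh–Dirichlet kernel `D n = ∑_{k<n} w k`. -/
def Dker (n : ℕ) (x : G) : ℝ := ∑ k ∈ Finset.range n, walsh k x

/-- Walsh–Fejér kernel `K n = (1/n) ∑_{k=1}^n D k`. -/
def Kker (n : ℕ) (x : G) : ℝ := (1 / (n : ℝ)) * ∑ k ∈ Finset.range n, Dker (k + 1) x

/-- Dyadic cylinder `I_n(y)`: points agreeing with `y` in the first `n` coordinates. -/
def cyl (n : ℕ) (y : G) : Set G := {x | ∀ j < n, x j = y j}

/-- `I_n = I_n(0)`. -/
def Iset (n : ℕ) : Set G := cyl n 0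

/-- The generator `e t`, with a single `1` in coordinate `t`. -/
def e (t : ℕ) : G := fun j => if j = t then 1 else 0

/-! ### Auxiliary lemmas -/

/-- Walsh function as a product over any sufficiently long range. -/
lemma walsh_eq_prod (m : ℕ) (x : G) {N : ℕ} (h : m < 2 ^ N) :
    walsh m x = ∏ k ∈ Finset.range N, if m.testBit k then (-1 : ℝ) ^ (x k).val else 1 := by
  have key : ∀ k, m + 1 ≤ k → (if m.testBit k then (-1 : ℝ) ^ (x k).val else 1) = 1 := by
    intro k hk
    rw [Nat.testBit_eq_false_of_lt (lt_of_lt_of_le (Nat.lt_two_pow_self (n := m))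
      (Nat.pow_le_pow_right (by norm_num) (by omega)))]
    simp
  have keyN : ∀ k, N ≤ k → (if m.testBit k then (-1 : ℝ) ^ (x k).val else 1) = 1 := by
    intro k hk
    rw [Nat.testBit_eq_false_of_lt (lt_of_lt_of_le h (Nat.pow_le_pow_right (by norm_num) hk))]
    simp
  unfold walsh
  rcases le_total (m + 1) N with hN | hN
  · exact Finset.prod_subset (Finset.range_subset_range.2 hN) fun k _ hk =>
      key k (le_of_not_gt (fun h' => hk (Finset.mem_range.2 h')))
  · exact (Finset.prod_subset (Finset.range_subset_range.2 hN) fun k _ hk =>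
      keyN k (le_of_not_gt (fun h' => hk (Finset.mem_range.2 h')))).symm

lemma walsh_two_pow_add {n k : ℕ} (hk : k < 2 ^ n) (x : G) :
    walsh (2 ^ n + k) x = (-1 : ℝ) ^ (x n).val * walsh k x := by
  have h1 : 2 ^ n + k < 2 ^ (n + 1) := by
    have : (2:ℕ) ^ (n+1) = 2 ^ n + 2 ^ n := by ring
    omega
  have h2 : k < 2 ^ (n + 1) := by
    have : (2:ℕ) ^ (n + 1) = 2 ^ n + 2 ^ n := by ring
    omega
  rw [walsh_eq_prod _ x h1, walsh_eq_prod _ x h2, Finset.prod_range_succ,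
    Finset.prod_range_succ]
  have hkn : k.testBit n = false := Nat.testBit_eq_false_of_lt hk
  have hbn : (2 ^ n + k).testBit n = true := by
    rw [Nat.testBit_two_pow_add_eq, hkn]; rfl
  rw [hbn, hkn, if_pos rfl, if_neg (by simp), mul_one, mul_comm]
  congr 1
  refine Finset.prod_congr rfl fun j hj => ?_
  rw [Nat.testBit_two_pow_add_gt (Finset.mem_range.1 hj)]

lemma walsh_eq_one {n k : ℕ} (hk : k < 2 ^ n) {x : G} (hx : ∀ j < n, x j = 0) :
    walsh k x = 1 := by
  unfold walsh
  refine Finset.prod_eq_one fun j _ => ?_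
  by_cases hb : k.testBit j
  · have hjn : j < n := by
      by_contra hcon
      push_neg at hcon
      rw [Nat.testBit_eq_false_of_lt
        (lt_of_lt_of_le hk (Nat.pow_le_pow_right (by norm_num) hcon))] at hb
      exact Bool.noConfusion hb
    rw [hx j hjn]
    simp [hb]
  · simp [hb]

lemma Dker_eq_of_mem {n m : ℕ} (hm : m ≤ 2 ^ n) {x : G} (hx : ∀ j < n, x j = 0) :
    Dker m x = m := by
  unfold Dker
  rw [Finset.sum_congr rfl fun k hk =>
    walsh_eq_one (lt_of_lt_of_le (Finset.mem_range.1 hk) hm) hx]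
  simp

lemma Dker_two_pow_add {n k : ℕ} (hk : k ≤ 2 ^ n) (x : G) :
    Dker (2 ^ n + k) x = Dker (2 ^ n) x + (-1 : ℝ) ^ (x n).val * Dker k x := by
  unfold Dker
  rw [Finset.sum_range_add]
  congr 1
  rw [Finset.mul_sum]
  refine Finset.sum_congr rfl fun j hj => ?_
  exact walsh_two_pow_add (lt_of_lt_of_le (Finset.mem_range.1 hj) hk) x

lemma Dker_two_pow_eq_zero {n : ℕ} {x : G} (hx : ¬ ∀ j < n, x j = 0) :
    Dker (2 ^ n) x = 0 := by
  induction n with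
  | zero => exact absurd (fun j hj => absurd hj (Nat.not_lt_zero j)) hx
  | succ n ih =>
    have h2 : (2:ℕ) ^ (n + 1) = 2 ^ n + 2 ^ n := by ring
    rw [h2, Dker_two_pow_add le_rfl x]
    by_cases h : ∀ j < n, x j = 0
    · have hxn : x n ≠ 0 := by
        intro h0
        exact hx fun j hj => by
          rcases Nat.lt_succ_iff_lt_or_eq.1 hj with h' | h'
          · exact h j h'
          · rw [h']; exact h0
      have hval : (x n).val = 1 := by
        have h1 : (x n).val < 2 := ZMod.val_lt (x n)
        have h0 : (x n).val ≠ 0 := fun hc => hxn ((ZMod.val_eq_zero _).1 hc)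
        omega
      rw [hval]
      ring
    · rw [ih h]; ring

/-- `S m = ∑_{k=1}^m D_k`. -/
def Sker (m : ℕ) (x : G) : ℝ := ∑ k ∈ Finset.range m, Dker (k + 1) x

lemma Kker_eq_Sker (m : ℕ) (x : G) : Kker m x = (1 / (m : ℝ)) * Sker m x := rfl

lemma Sker_succ (m : ℕ) (x : G) : Sker (m + 1) x = Sker m x + Dker (m + 1) x := by
  unfold Sker
  rw [Finset.sum_range_succ]

lemma Sker_double (n : ℕ) (x : G) :
    Sker (2 ^ (n + 1)) x
      = (1 + (-1 : ℝ) ^ (x n).val) * Sker (2 ^ n) x + (2 ^ n : ℝ) * Dker (2 ^ n) x := by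
  have h2 : (2:ℕ) ^ (n + 1) = 2 ^ n + 2 ^ n := by ring
  unfold Sker
  rw [h2, Finset.sum_range_add]
  have hcong : ∀ j ∈ Finset.range (2 ^ n),
      Dker (2 ^ n + j + 1) x
        = Dker (2 ^ n) x + (-1 : ℝ) ^ (x n).val * Dker (j + 1) x := by
    intro j hj
    have hj' := Finset.mem_range.1 hj
    rw [show 2 ^ n + j + 1 = 2 ^ n + (j + 1) by ring, Dker_two_pow_add (by omega) x]
  rw [Finset.sum_congr rfl hcong, Finset.sum_add_distrib, ← Finset.mul_sum,
    Finset.sum_const, Finset.card_range, nsmul_eq_mul]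
  push_cast
  ring

lemma gauss_sum (m : ℕ) : ∑ k ∈ Finset.range m, ((k : ℝ) + 1) = m * (m + 1) / 2 := by
  induction m with
  | zero => simp
  | succ m ih => rw [Finset.sum_range_succ, ih]; push_cast; ring

lemma Sker_eq_of_mem {n m : ℕ} (hm : m ≤ 2 ^ n) {x : G} (hx : ∀ j < n, x j = 0) :
    Sker m x = (m : ℝ) * (m + 1) / 2 := by
  unfold Sker
  have hterm : ∀ k ∈ Finset.range m, Dker (k + 1) x = (k : ℝ) + 1 := by
    intro k hk
    rw [Dker_eq_of_mem (show k + 1 ≤ 2 ^ n by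
      have := Finset.mem_range.1 hk; omega) hx]
    push_cast
    ring
  rw [Finset.sum_congr rfl hterm]
  exact gauss_sum m

lemma abs_div_le_helper {a b c c' : ℝ} (hc : 0 < c) (hc' : 0 < c')
    (h : |a| * c' ≤ 2 * |b| * c) :
    |(1 / c) * a| ≤ 2 * |(1 / c') * b| := by
  rw [abs_mul, abs_mul, abs_of_pos (show (0:ℝ) < 1 / c by positivity),
    abs_of_pos (show (0:ℝ) < 1 / c' by positivity), one_div, one_div,
    inv_mul_eq_div, inv_mul_eq_div, ← mul_div_assoc, div_le_div_iff₀ hc hc']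
  linarith

set_option maxHeartbeats 1600000 in
/-- comparison of dyadic Fejér kernels. -/
theorem fejer_dyadic_comparison :
    ∃ c₁ c₂ : ℝ, 0 < c₁ ∧ 0 < c₂ ∧
      ∀ n, 1 ≤ n → ∀ x : G,
        |Kker (2 ^ n) x| ≤ c₁ * |Kker (2 ^ (n - 1)) x| ∧
        |Kker (2 ^ n - 1) x| ≤ c₂ * |Kker (2 ^ n) x| := by
  refine ⟨2, 2, by norm_num, by norm_num, ?_⟩
  intro n hn x
  obtain ⟨m, rfl⟩ : ∃ m, n = m + 1 := ⟨n - 1, (Nat.succ_pred_eq_of_pos hn).symm⟩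
  simp only [Nat.add_sub_cancel]
  set wv : ℝ := (-1 : ℝ) ^ (x m).val with hwv
  have hw : wv = 1 ∨ wv = -1 :=
    (Nat.even_or_odd ((x m).val)).imp Even.neg_one_pow Odd.neg_one_pow
  set A := Sker (2 ^ m) x with hA
  set B := Sker (2 ^ (m + 1)) x with hB
  set C := Sker (2 ^ (m + 1) - 1) x with hC
  set M : ℝ := (2 : ℝ) ^ m with hMdef
  have hMpos : (0:ℝ) < M := by positivity
  have hM1 : (1:ℝ) ≤ M := one_le_pow₀ (by norm_num)
  have hcastm : ((2 ^ m : ℕ) : ℝ) = M := by rw [hMdef]; push_cast; ring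
  have hcastm1 : ((2 ^ (m + 1) : ℕ) : ℝ) = 2 * M := by rw [hMdef]; push_cast; ring
  have hNnat : (1:ℕ) ≤ 2 ^ (m + 1) := Nat.one_le_two_pow
  have hcastN1 : ((2 ^ (m + 1) - 1 : ℕ) : ℝ) = 2 * M - 1 := by
    rw [Nat.cast_sub hNnat, hcastm1]; norm_num
  have k0 : Kker (2 ^ m) x = (1 / M) * A := by rw [Kker_eq_Sker, hcastm, hA]
  have k1 : Kker (2 ^ (m + 1)) x = (1 / (2 * M)) * B := by rw [Kker_eq_Sker, hcastm1, hB]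
  have k2 : Kker (2 ^ (m + 1) - 1) x = (1 / (2 * M - 1)) * C := by
    rw [Kker_eq_Sker, hcastN1, hC]
  have hrec : B = (1 + wv) * A + M * Dker (2 ^ m) x := by
    rw [hB, Sker_double m x, hMdef]
  have hB4 : |B| ≤ 4 * |A| := by
    by_cases hxm : ∀ j < m, x j = 0
    · have hAval : A = M * (M + 1) / 2 := by
        rw [hA, Sker_eq_of_mem le_rfl hxm, hcastm]
      have hDval : Dker (2 ^ m) x = M := by
        rw [Dker_eq_of_mem le_rfl hxm, hcastm]
      have hAnn : (0:ℝ) ≤ A := by rw [hAval]; nlinarith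
      rw [hrec, hDval, abs_of_nonneg hAnn, hAval]
      rcases hw with h | h <;> rw [h] <;>
        rw [abs_of_nonneg (by nlinarith)] <;> nlinarith
    · have hD0 : Dker (2 ^ m) x = 0 := Dker_two_pow_eq_zero hxm
      rw [hrec, hD0, mul_zero, add_zero, abs_mul]
      have h1w : |1 + wv| ≤ 2 := by rcases hw with h | h <;> rw [h] <;> norm_num
      nlinarith [abs_nonneg A]
  constructor
  · rw [k0, k1]
    exact abs_div_le_helper (by positivity) hMpos (by nlinarith [abs_nonneg A, abs_nonneg B])
  · rw [k1, k2]
    have hsplit : B = C + Dker (2 ^ (m + 1)) x := by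
      rw [hB, hC, show (2:ℕ) ^ (m + 1) = (2 ^ (m + 1) - 1) + 1 by omega, Sker_succ,
        show (2 ^ (m + 1) - 1) + 1 = 2 ^ (m + 1) by omega]
    refine abs_div_le_helper (by linarith) (by linarith) ?_
    by_cases hx1 : ∀ j < m + 1, x j = 0
    · have hCval : C = (2 * M - 1) * (2 * M) / 2 := by
        rw [hC, Sker_eq_of_mem (Nat.sub_le _ _) hx1, hcastN1]
        ring
      have hBval : B = (2 * M) * (2 * M + 1) / 2 := by
        rw [hB, Sker_eq_of_mem le_rfl hx1, hcastm1]
      have hCnn : (0:ℝ) ≤ C := by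
        rw [hCval]
        have h1 : (0:ℝ) ≤ (2 * M - 1) * (2 * M) :=
          mul_nonneg (by linarith) (by linarith)
        linarith
      have hBnn : (0:ℝ) ≤ B := by
        rw [hBval]
        have h1 : (0:ℝ) ≤ (2 * M) * (2 * M + 1) :=
          mul_nonneg (by linarith) (by linarith)
        linarith
      rw [abs_of_nonneg hCnn, abs_of_nonneg hBnn, hCval, hBval]
      have hkey : (0:ℝ) ≤ 2 * M * ((2 * M - 1) * (M + 1)) :=
        mul_nonneg (by linarith) (mul_nonneg (by linarith) (by linarith))
      linarith [hkey]
    · have hD0 : Dker (2 ^ (m + 1)) x = 0 := Dker_two_pow_eq_zero hx1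
      rw [hD0, add_zero] at hsplit
      rw [← hsplit]
      have hkey : (0:ℝ) ≤ |B| * (2 * M - 2) :=
        mul_nonneg (abs_nonneg B) (by linarith)
      linarith [hkey]
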